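/- arXiv:0909.5293 — 3 statements merged into one kernel-verified Lean document; each statement's English description precedes it below -/
import Mathlib

section
/- Let G=(V,E) be a finite connected graph with opt = max_{E'⊆E} CR(E'). If E',E''⊆E both have cut-rate opt and E''∖E' ≠ ∅, then the cut-rate of E''∖E' computed in the graph G∖E' equals opt, and consequently the maximum cut-rate of G∖E' equals opt. -/
open Finset

/-- Number of connected components of the graph on `V` with edge set `E`. -/
noncomputable def nComp {V : Type} [Fintype V] [DecidableEq V] (E : Finset (Sym2 V)) : ℕ :=
  Nat.card (SimpleGraph.fromEdgeSet (↑E : Set (Sym2 V))).ConnectedComponent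

/-- The cut-rate of `E' ⊆ E` in the graph with edge set `E`. -/
noncomputable def cutRate {V : Type} [Fintype V] [DecidableEq V]
    (E E' : Finset (Sym2 V)) : ℝ :=
  if 1 < Fintype.card V ∧ E'.Nonempty then
    ((nComp (E \ E') : ℝ) - nComp E) / E'.card
  else 0

/-- The maximum cut-rate of the graph with edge set `E`. -/
noncomputable def opt {V : Type} [Fintype V] [DecidableEq V] (E : Finset (Sym2 V)) : ℝ :=
  E.powerset.sup' (Finset.powerset_nonempty E) (fun E' => cutRate E E')

/-- The graph with edge set `E` is connected. -/
def Conn {V : Type} [Fintype V] [DecidableEq V] (E : Finset (Sym2 V)) : Prop :=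
  (SimpleGraph.fromEdgeSet (↑E : Set (Sym2 V))).Connected

/-- `S` is a connected spanning subgraph of the graph with edge set `E`. -/
def IsCSG {V : Type} [Fintype V] [DecidableEq V] (E S : Finset (Sym2 V)) : Prop :=
  S ⊆ E ∧ Conn S

/-- `α` is a probability distribution on the edge set `E`. -/
def IsDist {V : Type} [Fintype V] [DecidableEq V] (E : Finset (Sym2 V))
    (α : Sym2 V → ℝ) : Prop :=
  (∀ e, 0 ≤ α e) ∧ (∀ e ∉ E, α e = 0) ∧ ∑ e ∈ E, α e = 1

/-- total weight of an edge set under `α`. -/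
noncomputable def wt {V : Type} [Fintype V] [DecidableEq V]
    (α : Sym2 V → ℝ) (S : Finset (Sym2 V)) : ℝ :=
  ∑ e ∈ S, α e

/-- `S` is a minimum-weight connected spanning subgraph for `α`. -/
def IsMinCSG {V : Type} [Fintype V] [DecidableEq V] (E : Finset (Sym2 V))
    (α : Sym2 V → ℝ) (S : Finset (Sym2 V)) : Prop :=
  IsCSG E S ∧ ∀ T, IsCSG E T → wt α S ≤ wt α T


section CSGAux
open SimpleGraph

lemma csg_reach_sup_edge {V : Type} {G : SimpleGraph V} {u v a b : V}
    (h : (G ⊔ SimpleGraph.edge u v).Reachable a b) :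
    G.Reachable a b ∨ (G.Reachable a u ∧ G.Reachable v b) ∨
      (G.Reachable a v ∧ G.Reachable u b) := by
  obtain ⟨w⟩ := h
  induction w with
  | nil => exact Or.inl (Reachable.refl _)
  | @cons x y z h p ih =>
    rcases h with hG | hE
    · rcases ih with h1 | ⟨h1, h2⟩ | ⟨h1, h2⟩
      · exact Or.inl (hG.reachable.trans h1)
      · exact Or.inr (Or.inl ⟨hG.reachable.trans h1, h2⟩)
      · exact Or.inr (Or.inr ⟨hG.reachable.trans h1, h2⟩)
    · rw [edge_adj] at hE
      obtain ⟨⟨rfl, rfl⟩ | ⟨rfl, rfl⟩, hne⟩ := hE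
      · rcases ih with h1 | ⟨h1, h2⟩ | ⟨h1, h2⟩
        · exact Or.inr (Or.inl ⟨Reachable.refl _, h1⟩)
        · exact Or.inr (Or.inl ⟨Reachable.refl _, h2⟩)
        · exact Or.inl h2
      · rcases ih with h1 | ⟨h1, h2⟩ | ⟨h1, h2⟩
        · exact Or.inr (Or.inr ⟨Reachable.refl _, h1⟩)
        · exact Or.inl h2
        · exact Or.inr (Or.inr ⟨Reachable.refl _, h2⟩)

variable {V : Type} [Fintype V] [DecidableEq V]

lemma csg_nComp_mono {s t : Finset (Sym2 V)} (h : s ⊆ t) : nComp t ≤ nComp s := by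
  have hle : fromEdgeSet (↑s : Set (Sym2 V)) ≤ fromEdgeSet ↑t :=
    fromEdgeSet_mono (by exact_mod_cast h)
  exact Nat.card_le_card_of_surjective _ (fun c =>
    c.ind fun v => ⟨(fromEdgeSet (↑s : Set (Sym2 V))).connectedComponentMk v,
      ConnectedComponent.map_mk (SimpleGraph.Hom.ofLE hle) v⟩)

lemma csg_fromEdgeSet_insert (u v : V) (X : Finset (Sym2 V)) :
    fromEdgeSet (↑(insert s(u,v) X) : Set (Sym2 V)) =
      fromEdgeSet (↑X : Set (Sym2 V)) ⊔ SimpleGraph.edge u v := by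
  rw [Finset.coe_insert, Set.insert_eq, fromEdgeSet_union, sup_comm]
  rfl

lemma csg_reach_insert {u v a b : V} {X : Finset (Sym2 V)}
    (h : (fromEdgeSet (↑(insert s(u,v) X) : Set (Sym2 V))).Reachable a b) :
    (fromEdgeSet (↑X : Set (Sym2 V))).Reachable a b ∨
      ((fromEdgeSet (↑X : Set (Sym2 V))).Reachable a u ∧
        (fromEdgeSet (↑X : Set (Sym2 V))).Reachable v b) ∨
      ((fromEdgeSet (↑X : Set (Sym2 V))).Reachable a v ∧
        (fromEdgeSet (↑X : Set (Sym2 V))).Reachable u b) := by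
  rw [csg_fromEdgeSet_insert] at h
  exact csg_reach_sup_edge h

lemma csg_hle (u v : V) (X : Finset (Sym2 V)) :
    fromEdgeSet (↑X : Set (Sym2 V)) ≤ fromEdgeSet (↑(insert s(u,v) X) : Set (Sym2 V)) :=
  fromEdgeSet_mono (by exact_mod_cast Finset.subset_insert _ _)

lemma csg_phi_cases {u v : V} {X : Finset (Sym2 V)}
    {C D : (fromEdgeSet (↑X : Set (Sym2 V))).ConnectedComponent}
    (h : C.map (SimpleGraph.Hom.ofLE (csg_hle u v X)) =
         D.map (SimpleGraph.Hom.ofLE (csg_hle u v X))) :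
    C = D ∨
      (C = (fromEdgeSet (↑X : Set (Sym2 V))).connectedComponentMk u ∧
        D = (fromEdgeSet (↑X : Set (Sym2 V))).connectedComponentMk v) ∨
      (C = (fromEdgeSet (↑X : Set (Sym2 V))).connectedComponentMk v ∧
        D = (fromEdgeSet (↑X : Set (Sym2 V))).connectedComponentMk u) := by
  revert h
  refine ConnectedComponent.ind₂ (fun a b h => ?_) C D
  rw [ConnectedComponent.map_mk, ConnectedComponent.map_mk,
    SimpleGraph.Hom.ofLE_apply, SimpleGraph.Hom.ofLE_apply] at h
  have hr := ConnectedComponent.exact h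
  rcases csg_reach_insert hr with h1 | ⟨h1, h2⟩ | ⟨h1, h2⟩
  · exact Or.inl (ConnectedComponent.sound h1)
  · exact Or.inr (Or.inl ⟨ConnectedComponent.sound h1, ConnectedComponent.sound h2.symm⟩)
  · exact Or.inr (Or.inr ⟨ConnectedComponent.sound h1, ConnectedComponent.sound h2.symm⟩)

lemma csg_nComp_le_insert (e : Sym2 V) (X : Finset (Sym2 V)) :
    nComp X ≤ nComp (insert e X) + 1 := by
  induction e using Sym2.ind with | _ u v =>
  have hinj : Function.Injective
      (fun C : {C : (fromEdgeSet (↑X : Set (Sym2 V))).ConnectedComponent //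
          C ≠ (fromEdgeSet (↑X : Set (Sym2 V))).connectedComponentMk u} =>
        C.1.map (SimpleGraph.Hom.ofLE (csg_hle u v X))) := by
    rintro ⟨C, hC⟩ ⟨D, hD⟩ h
    rcases csg_phi_cases h with h1 | ⟨h1, h2⟩ | ⟨h1, h2⟩
    · exact Subtype.ext h1
    · exact absurd h1 hC
    · exact absurd h2 hD
  classical
  have h1 : nComp X = Nat.card {C : (fromEdgeSet (↑X : Set (Sym2 V))).ConnectedComponent //
      C ≠ (fromEdgeSet (↑X : Set (Sym2 V))).connectedComponentMk u} + 1 := by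
    rw [nComp, ← Nat.card_congr
      (Equiv.optionSubtypeNe ((fromEdgeSet (↑X : Set (Sym2 V))).connectedComponentMk u)),
      Finite.card_option]
  rw [h1]
  exact Nat.add_le_add_right (Nat.card_le_card_of_injective _ hinj) 1

lemma csg_nComp_insert_eq {u v : V} {X : Finset (Sym2 V)}
    (h : (fromEdgeSet (↑X : Set (Sym2 V))).Reachable u v) :
    nComp (insert s(u,v) X) = nComp X := by
  have hsurj : Function.Surjective
      (ConnectedComponent.map (SimpleGraph.Hom.ofLE (csg_hle u v X))) :=
    fun c => c.ind fun w => ⟨(fromEdgeSet (↑X : Set (Sym2 V))).connectedComponentMk w,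
      ConnectedComponent.map_mk _ w⟩
  have hinj : Function.Injective
      (ConnectedComponent.map (SimpleGraph.Hom.ofLE (csg_hle u v X))) := by
    intro C D hCD
    rcases csg_phi_cases hCD with h1 | ⟨h1, h2⟩ | ⟨h1, h2⟩
    · exact h1
    · rw [h1, h2]; exact ConnectedComponent.sound h
    · rw [h1, h2]; exact ConnectedComponent.sound h.symm
  exact (Nat.card_eq_of_bijective _ ⟨hinj, hsurj⟩).symm

lemma csg_nComp_insert_lt {u v : V} {X : Finset (Sym2 V)} (huv : u ≠ v)
    (h : ¬ (fromEdgeSet (↑X : Set (Sym2 V))).Reachable u v) :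
    nComp (insert s(u,v) X) < nComp X := by
  refine lt_of_le_of_ne (csg_nComp_mono (Finset.subset_insert _ _)) (fun hcard => ?_)
  have hsurj : Function.Surjective
      (ConnectedComponent.map (SimpleGraph.Hom.ofLE (csg_hle u v X))) :=
    fun c => c.ind fun w => ⟨(fromEdgeSet (↑X : Set (Sym2 V))).connectedComponentMk w,
      ConnectedComponent.map_mk _ w⟩
  have hbij := (Nat.bijective_iff_surjective_and_card _).mpr ⟨hsurj, hcard.symm⟩
  have hadj : (fromEdgeSet (↑(insert s(u,v) X) : Set (Sym2 V))).Adj u v := by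
    rw [csg_fromEdgeSet_insert]
    exact Or.inr ((edge_adj u v u v).mpr ⟨Or.inl ⟨rfl, rfl⟩, huv⟩)
  have : (fromEdgeSet (↑X : Set (Sym2 V))).connectedComponentMk u =
      (fromEdgeSet (↑X : Set (Sym2 V))).connectedComponentMk v := by
    apply hbij.1
    rw [ConnectedComponent.map_mk, ConnectedComponent.map_mk,
      SimpleGraph.Hom.ofLE_apply, SimpleGraph.Hom.ofLE_apply]
    exact ConnectedComponent.sound hadj.reachable
  exact h (ConnectedComponent.exact this)

lemma csg_marginal {X Y : Finset (Sym2 V)} (e : Sym2 V) (hXY : X ⊆ Y) :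
    nComp Y + nComp (insert e X) ≤ nComp X + nComp (insert e Y) := by
  induction e using Sym2.ind with | _ u v =>
  rcases eq_or_ne u v with rfl | huv
  · have h1 : nComp (insert s(u,u) X) = nComp X := by
      unfold nComp; rw [csg_fromEdgeSet_insert, sup_edge_self]
    have h2 : nComp (insert s(u,u) Y) = nComp Y := by
      unfold nComp; rw [csg_fromEdgeSet_insert, sup_edge_self]
    omega
  · rcases lt_or_eq_of_le (csg_nComp_mono (Finset.subset_insert s(u,v) Y)) with hlt | heq
    · have hnr : ¬ (fromEdgeSet (↑Y : Set (Sym2 V))).Reachable u v := fun hr =>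
        absurd (csg_nComp_insert_eq hr) (by omega)
      have hnrX : ¬ (fromEdgeSet (↑X : Set (Sym2 V))).Reachable u v := fun hr =>
        hnr (hr.mono (fromEdgeSet_mono (by exact_mod_cast hXY)))
      have h2 := csg_nComp_insert_lt huv hnrX
      have h3 := csg_nComp_le_insert s(u,v) Y
      omega
    · have h4 := csg_nComp_mono (Finset.subset_insert s(u,v) X)
      omega

lemma csg_aux (D : Finset (Sym2 V)) : ∀ X Y : Finset (Sym2 V), X ⊆ Y →
    nComp Y + nComp (X ∪ D) ≤ nComp X + nComp (Y ∪ D) := by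
  induction D using Finset.induction with
  | empty => intro X Y _; simp [Finset.union_empty]; omega
  | @insert e D _ ih =>
    intro X Y hXY
    rw [Finset.union_insert, Finset.union_insert]
    have h1 := ih X Y hXY
    have h2 := csg_marginal e (Finset.union_subset_union hXY (Finset.Subset.refl D))
    omega

lemma csg_supermod (A B : Finset (Sym2 V)) :
    nComp A + nComp B ≤ nComp (A ∩ B) + nComp (A ∪ B) := by
  have h := csg_aux (B \ A) (B ∩ A) A Finset.inter_subset_right
  have hB : (B ∩ A) ∪ (B \ A) = B := by
    ext x
    simp only [Finset.mem_union, Finset.mem_inter, Finset.mem_sdiff]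
    tauto
  rw [hB, Finset.union_sdiff_self_eq_union, Finset.inter_comm B A] at h
  exact h

end CSGAux

theorem stmt_5 {V : Type} [Fintype V] [DecidableEq V] (E E' E'' : Finset (Sym2 V))
    (hconn : Conn E) (hsub' : E' ⊆ E) (hsub'' : E'' ⊆ E)
    (h' : cutRate E E' = opt E) (h'' : cutRate E E'' = opt E)
    (hne : (E'' \ E').Nonempty) :
    cutRate (E \ E') (E'' \ E') = opt E ∧ opt (E \ E') = opt E := by
  by_cases hV : 1 < Fintype.card V
  swap
  · have h0 : ∀ (F A : Finset (Sym2 V)), cutRate F A = 0 := by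
      intro F A; rw [cutRate, if_neg (fun hc => hV hc.1)]
    have hopt : ∀ F : Finset (Sym2 V), opt F = 0 := by
      intro F
      rw [opt, Finset.sup'_congr (Finset.powerset_nonempty F) rfl (fun A _ => h0 F A)]
      exact Finset.sup'_const _ 0
    exact ⟨by rw [h0 (E \ E') (E'' \ E'), hopt E], by rw [hopt (E \ E'), hopt E]⟩
  · rcases Finset.eq_empty_or_nonempty E' with rfl | hE'ne
    · rw [Finset.sdiff_empty, Finset.sdiff_empty]
      exact ⟨h'', rfl⟩
    set o := opt E with ho
    have hone : ∀ A : Finset (Sym2 V), A ⊆ E → cutRate E A ≤ o := fun A hA =>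
      Finset.le_sup' (cutRate E) (Finset.mem_powerset.mpr hA)
    have ho0 : (0:ℝ) ≤ o := by
      have h := hone ∅ (Finset.empty_subset E)
      rwa [cutRate, if_neg (by simp)] at h
    have hub : ∀ A : Finset (Sym2 V), A ⊆ E → (nComp (E \ A) : ℝ) ≤ nComp E + o * A.card := by
      intro A hA
      rcases Finset.eq_empty_or_nonempty A with rfl | hAne
      · simp
      · have h := hone A hA
        rw [cutRate, if_pos ⟨hV, hAne⟩,
          div_le_iff₀ (by exact_mod_cast Finset.card_pos.mpr hAne)] at h
        linarith
    have hcard' : (0:ℝ) < E'.card := by exact_mod_cast Finset.card_pos.mpr hE'ne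
    have heq' : (nComp (E \ E') : ℝ) = nComp E + o * E'.card := by
      rw [cutRate, if_pos ⟨hV, hE'ne⟩] at h'
      have h1 := (div_eq_iff (ne_of_gt hcard')).mp h'
      linarith
    have hE''ne : E''.Nonempty := by
      obtain ⟨x, hx⟩ := hne
      exact ⟨x, (Finset.mem_sdiff.mp hx).1⟩
    have hcard'' : (0:ℝ) < E''.card := by exact_mod_cast Finset.card_pos.mpr hE''ne
    have heq'' : (nComp (E \ E'') : ℝ) = nComp E + o * E''.card := by
      rw [cutRate, if_pos ⟨hV, hE''ne⟩] at h''
      have h1 := (div_eq_iff (ne_of_gt hcard'')).mp h''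
      linarith
    have hsup := csg_supermod (E \ E') (E \ E'')
    have hI : (E \ E') ∩ (E \ E'') = E \ (E' ∪ E'') := by
      ext x
      simp only [Finset.mem_inter, Finset.mem_sdiff, Finset.mem_union]
      tauto
    have hU : (E \ E') ∪ (E \ E'') = E \ (E' ∩ E'') := by
      ext x
      simp only [Finset.mem_union, Finset.mem_sdiff, Finset.mem_inter]
      tauto
    rw [hI, hU] at hsup
    have hsupR : (nComp (E \ E') : ℝ) + nComp (E \ E'') ≤
        nComp (E \ (E' ∪ E'')) + nComp (E \ (E' ∩ E'')) := by exact_mod_cast hsup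
    have hcardid : (E'.card : ℝ) + E''.card = (E' ∪ E'').card + (E' ∩ E'').card := by
      exact_mod_cast (Finset.card_union_add_card_inter E' E'').symm
    have hmul : o * ((E' ∪ E'').card : ℝ) + o * ((E' ∩ E'').card : ℝ) =
        o * E'.card + o * E''.card := by
      have : o * ((E'.card : ℝ) + E''.card) = o * (((E' ∪ E'').card : ℝ) + (E' ∩ E'').card) := by
        rw [hcardid]
      linarith [this]
    have hUb := hub (E' ∪ E'') (Finset.union_subset hsub' hsub'')
    have hIb := hub (E' ∩ E'') (Finset.Subset.trans Finset.inter_subset_left hsub')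
    have key : (nComp (E \ (E' ∪ E'')) : ℝ) = nComp E + o * (E' ∪ E'').card := by
      nlinarith [hsupR, hUb, hIb, heq', heq'', hmul]
    have g1 : cutRate (E \ E') (E'' \ E') = o := by
      rw [cutRate, if_pos ⟨hV, hne⟩]
      have hsd : (E \ E') \ (E'' \ E') = E \ (E' ∪ E'') := by
        ext x
        simp only [Finset.mem_sdiff, Finset.mem_union]
        tauto
      have hcsd : ((E'' \ E').card : ℝ) = (E' ∪ E'').card - E'.card := by
        have h1 : E'' \ E' = (E' ∪ E'') \ E' := by
          ext x
          simp only [Finset.mem_sdiff, Finset.mem_union]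
          tauto
        rw [h1, Finset.card_sdiff_of_subset Finset.subset_union_left,
          Nat.cast_sub (Finset.card_le_card Finset.subset_union_left)]
      have hpos : (0:ℝ) < ((E'' \ E').card : ℝ) := by
        exact_mod_cast Finset.card_pos.mpr hne
      rw [hsd, key, heq', div_eq_iff (ne_of_gt hpos), hcsd]
      ring
    refine ⟨g1, ?_⟩
    apply le_antisymm
    · apply Finset.sup'_le
      intro A hA
      rw [Finset.mem_powerset] at hA
      rcases Finset.eq_empty_or_nonempty A with rfl | hAne
      · rw [cutRate, if_neg (by simp)]; exact ho0
      · rw [cutRate, if_pos ⟨hV, hAne⟩,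
          div_le_iff₀ (by exact_mod_cast Finset.card_pos.mpr hAne)]
        have hsd2 : (E \ E') \ A = E \ (E' ∪ A) := by
          ext x
          simp only [Finset.mem_sdiff, Finset.mem_union]
          constructor
          · rintro ⟨⟨h1, h2⟩, h3⟩
            exact ⟨h1, by tauto⟩
          · rintro ⟨h1, h2⟩
            exact ⟨⟨h1, fun h => h2 (Or.inl h)⟩, fun h => h2 (Or.inr h)⟩
        have hAE : A ⊆ E := hA.trans Finset.sdiff_subset
        have hdisj : Disjoint E' A := by
          rw [Finset.disjoint_right]
          intro a ha
          exact (Finset.mem_sdiff.mp (hA ha)).2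
        have hcardU : ((E' ∪ A).card : ℝ) = E'.card + A.card := by
          exact_mod_cast Finset.card_union_of_disjoint hdisj
        have hb := hub (E' ∪ A) (Finset.union_subset hsub' hAE)
        have hmul2 : o * ((E' ∪ A).card : ℝ) = o * E'.card + o * A.card := by
          rw [hcardU]; ring
        rw [hsd2, heq']
        linarith
    · have hmem : E'' \ E' ∈ (E \ E').powerset :=
        Finset.mem_powerset.mpr (Finset.sdiff_subset_sdiff hsub'' (Finset.Subset.refl E'))
      calc o = cutRate (E \ E') (E'' \ E') := g1.symm
        _ ≤ opt (E \ E') := Finset.le_sup' _ hmem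
end

section
/- Let G=(V,E) be a finite connected graph with opt = max_{E'⊆E} CR(E'). For any probability distribution α on E, min over connected spanning subgraphs S of α(S) ≤ opt ≤ 1. In particular, the hider can always guarantee a wiretap probability of at most opt by an appropriate mixed strategy over connected spanning subgraphs. -/
open Finset

section Aux
variable {V : Type} [Fintype V] [DecidableEq V]

def Gr {V : Type} [Fintype V] [DecidableEq V] (T : Finset (Sym2 V)) : SimpleGraph V :=
  SimpleGraph.fromEdgeSet (↑T : Set (Sym2 V))

lemma nComp_def (T : Finset (Sym2 V)) : nComp T = Nat.card (Gr T).ConnectedComponent := rfl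

lemma nComp_mono {T T' : Finset (Sym2 V)} (h : T ⊆ T') : nComp T' ≤ nComp T := by
  have hle : (Gr T) ≤ (Gr T') := by
    apply SimpleGraph.fromEdgeSet_mono
    exact_mod_cast h
  apply Nat.card_le_card_of_surjective
    (SimpleGraph.ConnectedComponent.map (SimpleGraph.Hom.ofLE hle))
  intro C
  refine C.ind (fun v => ?_)
  exact ⟨(Gr T).connectedComponentMk v, rfl⟩

lemma nComp_empty : nComp (∅ : Finset (Sym2 V)) = Fintype.card V := by
  rw [nComp]
  rw [show ((∅ : Finset (Sym2 V)) : Set (Sym2 V)) = ∅ by simp, SimpleGraph.fromEdgeSet_empty]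
  rw [← Nat.card_eq_fintype_card]
  symm
  apply Nat.card_eq_of_bijective (fun v => (⊥ : SimpleGraph V).connectedComponentMk v)
  constructor
  · intro a b hab
    exact SimpleGraph.reachable_bot.mp (SimpleGraph.ConnectedComponent.eq.mp hab)
  · intro C; exact C.ind (fun v => ⟨v, rfl⟩)

lemma gr_adj {T : Finset (Sym2 V)} {a b : V} :
    (Gr T).Adj a b ↔ s(a, b) ∈ T ∧ a ≠ b := by
  simp [Gr, SimpleGraph.fromEdgeSet_adj]

lemma reach_of_mem {T : Finset (Sym2 V)} {a b : V} (h : s(a, b) ∈ T) :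
    (Gr T).Reachable a b := by
  by_cases hab : a = b
  · exact hab ▸ SimpleGraph.Reachable.refl a
  · exact (gr_adj.mpr ⟨h, hab⟩).reachable

lemma reach_insert {u v : V} {T : Finset (Sym2 V)} {a b : V}
    (h : (Gr (insert s(u,v) T)).Reachable a b) :
    (Gr T).Reachable a b ∨ ((Gr T).Reachable a u ∧ (Gr T).Reachable v b) ∨
      ((Gr T).Reachable a v ∧ (Gr T).Reachable u b) := by
  obtain ⟨w⟩ := h
  induction w with
  | nil => exact Or.inl (SimpleGraph.Reachable.refl _)
  | @cons x y z hxy w ih =>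
    have hxy' : s(x, y) ∈ insert s(u,v) T ∧ x ≠ y := gr_adj.mp hxy
    rcases Finset.mem_insert.mp hxy'.1 with he | hT
    · have hcases : (x = u ∧ y = v) ∨ (x = v ∧ y = u) := by
        rwa [Sym2.eq_iff] at he
      rcases hcases with ⟨hx, hy⟩ | ⟨hx, hy⟩ <;> subst hx <;> subst hy
      · rcases ih with h1 | ⟨h2, h3⟩ | ⟨h2, h3⟩
        · exact Or.inr (Or.inl ⟨SimpleGraph.Reachable.refl _, h1⟩)
        · exact Or.inr (Or.inl ⟨SimpleGraph.Reachable.refl _, h3⟩)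
        · exact Or.inl h3
      · rcases ih with h1 | ⟨h2, h3⟩ | ⟨h2, h3⟩
        · exact Or.inr (Or.inr ⟨SimpleGraph.Reachable.refl _, h1⟩)
        · exact Or.inl h3
        · exact Or.inr (Or.inr ⟨SimpleGraph.Reachable.refl _, h3⟩)
    · have hxyr : (Gr T).Reachable x y := (gr_adj.mpr ⟨hT, hxy'.2⟩).reachable
      rcases ih with h1 | ⟨h2, h3⟩ | ⟨h2, h3⟩
      · exact Or.inl (hxyr.trans h1)
      · exact Or.inr (Or.inl ⟨hxyr.trans h2, h3⟩)
      · exact Or.inr (Or.inr ⟨hxyr.trans h2, h3⟩)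

lemma gr_insert_loop (u : V) (T : Finset (Sym2 V)) : Gr (insert s(u,u) T) = Gr T := by
  ext a b
  rw [gr_adj, gr_adj, Finset.mem_insert]
  constructor
  · rintro ⟨h1 | h1, h2⟩
    · exfalso; rw [Sym2.eq_iff] at h1
      rcases h1 with ⟨rfl, rfl⟩ | ⟨rfl, rfl⟩ <;> exact h2 rfl
    · exact ⟨h1, h2⟩
  · rintro ⟨h1, h2⟩; exact ⟨Or.inr h1, h2⟩

/-- the canonical surjection on components from inserting an edge -/
noncomputable def ccmap {T T' : Finset (Sym2 V)} (h : T ⊆ T') :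
    (Gr T).ConnectedComponent → (Gr T').ConnectedComponent :=
  SimpleGraph.ConnectedComponent.map (SimpleGraph.Hom.ofLE
    (SimpleGraph.fromEdgeSet_mono (by exact_mod_cast h)))

lemma ccmap_mk {T T' : Finset (Sym2 V)} (h : T ⊆ T') (v : V) :
    ccmap h ((Gr T).connectedComponentMk v) = (Gr T').connectedComponentMk v := rfl

lemma ccmap_surj {T T' : Finset (Sym2 V)} (h : T ⊆ T') : Function.Surjective (ccmap h) := by
  intro C; refine C.ind (fun v => ?_); exact ⟨(Gr T).connectedComponentMk v, rfl⟩

lemma nComp_le_insert (e : Sym2 V) (T : Finset (Sym2 V)) :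
    nComp T ≤ nComp (insert e T) + 1 := by
  induction e with
  | h u v =>
    by_cases huv : u = v
    · subst huv
      rw [nComp_def, nComp_def, gr_insert_loop]; omega
    · set cu := (Gr T).connectedComponentMk u with hcu
      set cv := (Gr T).connectedComponentMk v with hcv
      have hsub : T ⊆ insert s(u,v) T := Finset.subset_insert _ _
      set f := ccmap (T' := insert s(u,v) T) hsub with hf
      have hmerge : ∀ x1 x2, f x1 = f x2 → x1 = x2 ∨ ((x1 = cu ∨ x1 = cv) ∧ (x2 = cu ∨ x2 = cv)) := by
        intro x1 x2
        refine SimpleGraph.ConnectedComponent.ind₂ (fun a b hab => ?_) x1 x2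
        rw [hf, ccmap_mk, ccmap_mk, SimpleGraph.ConnectedComponent.eq] at hab
        rcases reach_insert hab with h1 | ⟨h2, h3⟩ | ⟨h2, h3⟩
        · exact Or.inl (SimpleGraph.ConnectedComponent.eq.mpr h1)
        · exact Or.inr ⟨Or.inl (SimpleGraph.ConnectedComponent.eq.mpr h2),
            Or.inr (SimpleGraph.ConnectedComponent.eq.mpr h3.symm)⟩
        · exact Or.inr ⟨Or.inr (SimpleGraph.ConnectedComponent.eq.mpr h2),
            Or.inl (SimpleGraph.ConnectedComponent.eq.mpr h3.symm)⟩
      classical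
      have hinj : Function.Injective
          (fun x => if x = cu then none else some (f x)) := by
        intro x1 x2 h12
        simp only at h12
        by_cases h1 : x1 = cu <;> by_cases h2 : x2 = cu
        · rw [h1, h2]
        · rw [if_pos h1, if_neg h2] at h12; exact absurd h12.symm (Option.some_ne_none _)
        · rw [if_neg h1, if_pos h2] at h12; exact absurd h12 (Option.some_ne_none _)
        · rw [if_neg h1, if_neg h2] at h12
          rcases hmerge x1 x2 (Option.some_injective _ h12) with h | ⟨ha, hb⟩
          · exact h
          · rcases ha with ha | ha
            · exact absurd ha h1
            · rcases hb with hb | hb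
              · exact absurd hb h2
              · rw [ha, hb]
      calc nComp T ≤ Nat.card (Option (Gr (insert s(u,v) T)).ConnectedComponent) :=
            Nat.card_le_card_of_injective _ hinj
        _ = nComp (insert s(u,v) T) + 1 := by
            letI := Fintype.ofFinite (Gr (insert s(u,v) T)).ConnectedComponent
            rw [nComp_def, Nat.card_eq_fintype_card, Nat.card_eq_fintype_card,
              Fintype.card_option]

lemma nComp_insert_lt {u v : V} {T : Finset (Sym2 V)} (huv : u ≠ v)
    (hreach : ¬ (Gr T).Reachable u v) : nComp (insert s(u,v) T) < nComp T := by
  have hsub : T ⊆ insert s(u,v) T := Finset.subset_insert _ _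
  letI := Fintype.ofFinite (Gr T).ConnectedComponent
  letI := Fintype.ofFinite (Gr (insert s(u,v) T)).ConnectedComponent
  rw [nComp_def, nComp_def, Nat.card_eq_fintype_card, Nat.card_eq_fintype_card]
  apply Fintype.card_lt_of_surjective_not_injective (ccmap hsub) (ccmap_surj hsub)
  intro hinj
  apply hreach
  have : s(u,v) ∈ insert s(u,v) T := Finset.mem_insert_self _ _
  have hadj : (Gr (insert s(u,v) T)).Reachable u v := reach_of_mem this
  have := hinj (a₁ := (Gr T).connectedComponentMk u) (a₂ := (Gr T).connectedComponentMk v)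
    (by rw [ccmap_mk, ccmap_mk]; exact SimpleGraph.ConnectedComponent.eq.mpr hadj)
  exact SimpleGraph.ConnectedComponent.eq.mp this

lemma reach_mono {T T' : Finset (Sym2 V)} (h : T ⊆ T') {a b : V}
    (hr : (Gr T).Reachable a b) : (Gr T').Reachable a b := by
  have := SimpleGraph.ConnectedComponent.eq.mpr hr
  have := congrArg (ccmap h) this
  rw [ccmap_mk, ccmap_mk] at this
  exact SimpleGraph.ConnectedComponent.eq.mp this

lemma nComp_eq_of_reach {T F : Finset (Sym2 V)} (hsub : T ⊆ F)
    (hall : ∀ e ∈ F, ∀ u v : V, e = s(u,v) → (Gr T).Reachable u v) :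
    nComp F = nComp T := by
  have hinj : Function.Injective (ccmap hsub) := by
    intro x1 x2
    refine SimpleGraph.ConnectedComponent.ind₂ (fun a b hab => ?_) x1 x2
    rw [ccmap_mk, ccmap_mk, SimpleGraph.ConnectedComponent.eq] at hab
    apply SimpleGraph.ConnectedComponent.eq.mpr
    obtain ⟨w⟩ := hab
    induction w with
    | nil => exact SimpleGraph.Reachable.refl _
    | @cons x y z hxy w ih =>
      have hxy' : s(x, y) ∈ F ∧ x ≠ y := gr_adj.mp hxy
      exact (hall _ hxy'.1 x y rfl).trans ih
  exact (Nat.card_eq_of_bijective _ ⟨hinj, ccmap_surj hsub⟩).symm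

lemma card_add_nComp (A : Finset (Sym2 V)) : Fintype.card V ≤ A.card + nComp A := by
  induction A using Finset.induction with
  | empty => rw [nComp_empty]; simp
  | @insert e A he ih =>
    have := nComp_le_insert e A
    rw [Finset.card_insert_of_notMem he]
    omega

lemma nComp_sdiff_le (A B : Finset (Sym2 V)) : nComp A ≤ nComp (A ∪ B) + B.card := by
  induction B using Finset.induction with
  | empty => simp [nComp_mono (Finset.subset_union_left (s₂ := (∅ : Finset (Sym2 V))))]
  | @insert e B he ih =>
    have h1 := nComp_le_insert e (A ∪ B)
    have h2 : insert e (A ∪ B) = A ∪ insert e B := by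
      rw [Finset.union_insert]
    rw [Finset.card_insert_of_notMem he]
    rw [h2] at h1
    omega

/-- Kruskal-type extension lemma -/
lemma kruskal_ext (F : Finset (Sym2 V)) :
    ∀ n (T : Finset (Sym2 V)), nComp T = n → T ⊆ F →
    ∃ S : Finset (Sym2 V), T ⊆ S ∧ S ⊆ F ∧ nComp S = nComp F ∧
      S.card + nComp F ≤ T.card + nComp T := by
  intro n
  induction n using Nat.strong_induction_on with
  | _ n ih =>
    intro T hn hTF
    by_cases hall : ∀ e ∈ F, ∀ u v : V, e = s(u,v) → (Gr T).Reachable u v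
    · exact ⟨T, le_refl _, hTF, (nComp_eq_of_reach hTF hall).symm ▸ rfl,
        by rw [nComp_eq_of_reach hTF hall]⟩
    · push_neg at hall
      obtain ⟨e, heF, u, v, rfl, hur⟩ := hall
      have huv : u ≠ v := fun h => hur (h ▸ SimpleGraph.Reachable.refl u)
      have hlt : nComp (insert s(u,v) T) < nComp T := nComp_insert_lt huv hur
      have heT : s(u,v) ∉ T := fun h => hur (reach_of_mem h)
      have hsub' : insert s(u,v) T ⊆ F := Finset.insert_subset heF hTF
      obtain ⟨S, hS1, hS2, hS3, hS4⟩ :=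
        ih (nComp (insert s(u,v) T)) (hn ▸ hlt) (insert s(u,v) T) rfl hsub'
      refine ⟨S, le_trans (Finset.subset_insert _ _) hS1, hS2, hS3, ?_⟩
      rw [Finset.card_insert_of_notMem heT] at hS4
      omega

lemma nComp_eq_one_of_conn {T : Finset (Sym2 V)} (h : (Gr T).Connected) : nComp T = 1 := by
  rw [nComp_def, Nat.card_eq_one_iff_unique]
  exact ⟨h.preconnected.subsingleton_connectedComponent,
    ⟨(Gr T).connectedComponentMk h.nonempty.some⟩⟩

lemma conn_of_nComp_eq_one [Nonempty V] {T : Finset (Sym2 V)} (h : nComp T = 1) :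
    (Gr T).Connected := by
  rw [nComp_def, Nat.card_eq_one_iff_unique] at h
  haveI := h.1
  constructor
  intro u v
  exact SimpleGraph.ConnectedComponent.eq.mp
    (Subsingleton.elim ((Gr T).connectedComponentMk u) ((Gr T).connectedComponentMk v))

lemma conn_gr {E : Finset (Sym2 V)} : Conn E ↔ (Gr E).Connected := Iff.rfl

lemma opt_degenerate (E : Finset (Sym2 V)) (hV : ¬ 1 < Fintype.card V) : opt E = 0 := by
  unfold opt
  have : ∀ E' ∈ E.powerset, cutRate E E' = 0 := by
    intro E' _
    unfold cutRate
    rw [if_neg (fun h => hV h.1)]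
  rw [Finset.sup'_congr _ rfl this, Finset.sup'_const]

lemma conn_empty [Nonempty V] (hV : ¬ 1 < Fintype.card V) : Conn (∅ : Finset (Sym2 V)) := by
  have hsub : Subsingleton V := by
    rwa [← Fintype.card_le_one_iff_subsingleton, ← not_lt]
  rw [conn_gr]
  constructor
  intro u v
  rw [Subsingleton.elim u v]

lemma opt_le_one (E : Finset (Sym2 V)) (hconn : Conn E) : opt E ≤ 1 := by
  apply Finset.sup'_le
  intro E' hE'
  unfold cutRate
  split_ifs with h
  · rw [div_le_one (by exact_mod_cast Finset.card_pos.mpr h.2)]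
    have h1 := nComp_sdiff_le (E \ E') E'
    rw [Finset.sdiff_union_of_subset (Finset.mem_powerset.mp hE')] at h1
    have h2 : nComp E = 1 := nComp_eq_one_of_conn hconn
    rw [h2] at h1 ⊢
    have h3 : ((nComp (E \ E') : ℝ)) ≤ 1 + E'.card := by exact_mod_cast h1
    push_cast
    linarith
  · exact zero_le_one

lemma gr_empty : Gr (∅ : Finset (Sym2 V)) = ⊥ := by
  simp [Gr]

lemma exists_good_csg (E : Finset (Sym2 V)) (hconn : Conn E) (α : Sym2 V → ℝ)
    (hα : IsDist E α) : ∃ S, IsCSG E S ∧ wt α S ≤ opt E := by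
  classical
  have hnonV : Nonempty V := (conn_gr.mp hconn).nonempty
  by_cases hV : 1 < Fintype.card V
  swap
  · refine ⟨∅, ⟨Finset.empty_subset _, conn_empty hV⟩, ?_⟩
    rw [opt_degenerate E hV]
    simp [wt]
  obtain ⟨hα0, hαsupp, hα1⟩ := hα
  have hE : E.Nonempty := by
    by_contra h
    rw [Finset.not_nonempty_iff_eq_empty] at h
    subst h
    have hsub : Subsingleton V := by
      constructor
      intro a b
      have h2 := (conn_gr.mp hconn).preconnected a b
      rw [gr_empty] at h2
      exact SimpleGraph.reachable_bot.mp h2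
    have := Fintype.card_le_one_iff_subsingleton.mpr hsub
    omega
  -- sorted list of values
  set l : List ℝ := ((E.image α).sort (· ≤ ·)) with hl
  set k : ℕ := l.length with hk
  have hk1 : 1 ≤ k := by
    rw [hk, hl, Finset.length_sort]
    exact Finset.card_pos.mpr (hE.image α)
  set v : ℕ → ℝ := fun j => if j = 0 then 0 else l.getD (j-1) 0 with hv
  have hsorted : l.Pairwise (· < ·) := (Finset.sortedLT_sort _).pairwise
  have hvget : ∀ j, 1 ≤ j → j ≤ k → ∀ (hj : j - 1 < l.length), v j = l[j-1] := by
    intro j hj1 hjk hj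
    rw [hv]
    simp only [if_neg (by omega : ¬ j = 0)]
    exact List.getD_eq_getElem l 0 hj
  have hvmem : ∀ j, 1 ≤ j → j ≤ k → v j ∈ E.image α := by
    intro j hj1 hjk
    have hj : j - 1 < l.length := by omega
    rw [hvget j hj1 hjk hj, ← Finset.mem_sort (· ≤ ·)]
    exact List.getElem_mem hj
  have hv0 : ∀ j, 0 ≤ v j := by
    intro j
    rw [hv]
    by_cases hj0 : j = 0
    · simp [hj0]
    · simp only [if_neg hj0]
      by_cases hjk : j - 1 < l.length
      · rw [List.getD_eq_getElem l 0 hjk]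
        have : l[j-1] ∈ E.image α := by
          rw [← Finset.mem_sort (· ≤ ·)]; exact List.getElem_mem hjk
        obtain ⟨e, _, he⟩ := Finset.mem_image.mp this
        rw [← he]; exact hα0 e
      · rw [List.getD_eq_default l 0 (by omega)]
  have hvstrict : ∀ i j, i < j → j ≤ k → v i < v j ∨ (i = 0 ∧ v j = 0) := by
    intro i j hij hjk
    by_cases hi0 : i = 0
    · subst hi0
      rcases lt_or_eq_of_le (hv0 j) with h | h
      · left
        have h0 : v 0 = 0 := by rw [hv]; simp
        rw [h0]; exact h
      · right; exact ⟨rfl, h.symm⟩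
    · left
      have h1 : i - 1 < j - 1 := by omega
      have h2 : j - 1 < l.length := by omega
      rw [hvget i (by omega) (by omega) (by omega), hvget j (by omega) hjk h2]
      exact List.pairwise_iff_getElem.mp hsorted _ _ _ _ h1
  have hvmono : ∀ i j, i ≤ j → j ≤ k → v i ≤ v j := by
    intro i j hij hjk
    rcases eq_or_lt_of_le hij with rfl | hlt
    · exact le_refl _
    · rcases hvstrict i j hlt hjk with h | ⟨h0, hj⟩
      · exact le_of_lt h
      · rw [h0, hj]; exact hv0 0
  have hvtop : ∀ e ∈ E, α e ≤ v k := by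
    intro e he
    have hmem : α e ∈ l := by
      rw [hl, Finset.mem_sort (· ≤ ·)]
      exact Finset.mem_image_of_mem α he
    obtain ⟨i, hi, hieq⟩ := List.mem_iff_getElem.mp hmem
    rw [← hieq, hvget k hk1 le_rfl (by omega)]
    rcases eq_or_lt_of_le (by omega : i ≤ k - 1) with rfl | hlt
    · exact le_refl _
    · exact le_of_lt (List.pairwise_iff_getElem.mp hsorted _ _ _ (by omega) hlt)
  have hvkpos : 0 < v k := by
    have hex : ∃ e ∈ E, 0 < α e := by
      by_contra h
      push_neg at h
      have : ∑ e ∈ E, α e = 0 :=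
        Finset.sum_eq_zero (fun e he => le_antisymm (h e he) (hα0 e))
      rw [hα1] at this; norm_num at this
    obtain ⟨e, he, hpos⟩ := hex
    exact lt_of_lt_of_le hpos (hvtop e he)
  have hv00 : v 0 = 0 := by rw [hv]; simp
  -- pointwise decomposition
  have hPT : ∀ e ∈ E, α e =
      ∑ j ∈ Finset.range k, (v (j+1) - v j) * (if v j < α e then (1:ℝ) else 0) := by
    intro e he
    by_cases hze : α e = 0
    · rw [hze]
      symm
      apply Finset.sum_eq_zero
      intro j _
      rw [if_neg (not_lt.mpr (hv0 j)), mul_zero]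
    · have hmem : α e ∈ l := by
        rw [hl, Finset.mem_sort (· ≤ ·)]
        exact Finset.mem_image_of_mem α he
      obtain ⟨i0, hi0, hieq⟩ := List.mem_iff_getElem.mp hmem
      have hpos : 0 < α e := lt_of_le_of_ne (hα0 e) (Ne.symm hze)
      have hval : v (i0+1) = α e := by
        rw [hvget (i0+1) (by omega) (by omega) (by simpa using hi0)]
        simpa using hieq
      have hterm : ∀ j ∈ Finset.range k,
          (v (j+1) - v j) * (if v j < α e then (1:ℝ) else 0)
          = if j < i0 + 1 then (v (j+1) - v j) else 0 := by
        intro j hj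
        rw [Finset.mem_range] at hj
        by_cases hji : j < i0 + 1
        · rw [if_pos hji, if_pos, mul_one]
          by_cases hj0 : j = 0
          · rw [hj0, hv00]; exact hpos
          · rw [← hval]
            rcases hvstrict j (i0+1) (by omega) (by omega) with h | ⟨h0, _⟩
            · exact h
            · exact absurd h0 hj0
        · rw [if_neg hji, if_neg, mul_zero]
          push_neg
          rw [← hval]
          exact hvmono (i0+1) j (by omega) (by omega)
      rw [Finset.sum_congr rfl hterm]
      have hsub : Finset.range (i0+1) ⊆ Finset.range k := by
        apply Finset.range_subset_range.mpr; omega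
      rw [← Finset.sum_subset hsub (fun x _ hx => by
        rw [if_neg (by simpa using hx)])]
      rw [Finset.sum_congr rfl (fun x hx => if_pos (Finset.mem_range.mp hx)),
        Finset.sum_range_sub v (i0+1), hval, hv00, sub_zero]
  -- summed decomposition
  have hSUM : ∀ S : Finset (Sym2 V), S ⊆ E → wt α S =
      ∑ j ∈ Finset.range k, (v (j+1) - v j) *
        ((S.card : ℝ) - ((S.filter (fun e => α e ≤ v j)).card : ℝ)) := by
    intro S hS
    rw [wt, Finset.sum_congr rfl (fun e he => hPT e (hS he)), Finset.sum_comm]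
    apply Finset.sum_congr rfl
    intro j _
    rw [← Finset.mul_sum]
    congr 1
    rw [Finset.sum_boole]
    have hsplit := Finset.card_filter_add_card_filter_not
      (s := S) (p := fun e => α e ≤ v j)
    have hns : S.filter (fun e => ¬ α e ≤ v j) = S.filter (fun e => v j < α e) := by
      apply Finset.filter_congr; intro e _; rw [not_le]
    rw [hns] at hsplit
    have h1 : ((S.filter (fun e => v j < α e)).card : ℝ)
        + ((S.filter (fun e => α e ≤ v j)).card : ℝ) = (S.card : ℝ) := by
      exact_mod_cast by omega
    linarith
  -- the nested Kruskal chain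
  have hchain : ∀ j, j ≤ k → ∃ T : Finset (Sym2 V),
      T ⊆ E.filter (fun e => α e ≤ v j) ∧
      nComp T = nComp (E.filter (fun e => α e ≤ v j)) ∧
      T.card + nComp (E.filter (fun e => α e ≤ v j)) ≤ Fintype.card V ∧
      ∀ i, i ≤ j → Fintype.card V ≤
        (T ∩ E.filter (fun e => α e ≤ v i)).card + nComp (E.filter (fun e => α e ≤ v i)) := by
    intro j
    induction j with
    | zero =>
      intro _
      obtain ⟨T, hT1, hT2, hT3, hT4⟩ := kruskal_ext (E.filter (fun e => α e ≤ v 0))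
        (nComp (∅ : Finset (Sym2 V))) ∅ rfl (Finset.empty_subset _)
      refine ⟨T, hT2, hT3, ?_, ?_⟩
      · rw [nComp_empty, Finset.card_empty, zero_add] at hT4
        exact hT4
      · intro i hi
        rw [Nat.le_zero.mp hi]
        rw [Finset.inter_eq_left.mpr hT2]
        calc Fintype.card V ≤ T.card + nComp T := card_add_nComp T
          _ = T.card + nComp (E.filter (fun e => α e ≤ v 0)) := by rw [hT3]
    | succ j ihj =>
      intro hjk
      obtain ⟨T, hT1, hT2, hT3, hT4⟩ := ihj (by omega)
      have hmono : E.filter (fun e => α e ≤ v j) ⊆ E.filter (fun e => α e ≤ v (j+1)) := by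
        intro e he
        rw [Finset.mem_filter] at he ⊢
        exact ⟨he.1, le_trans he.2 (hvmono j (j+1) (by omega) hjk)⟩
      obtain ⟨S, hS1, hS2, hS3, hS4⟩ := kruskal_ext (E.filter (fun e => α e ≤ v (j+1)))
        (nComp T) T rfl (hT1.trans hmono)
      refine ⟨S, hS2, hS3, by omega, ?_⟩
      intro i hi
      rcases Nat.lt_or_ge i (j+1) with hij | hij
      · calc Fintype.card V
            ≤ (T ∩ E.filter (fun e => α e ≤ v i)).card
              + nComp (E.filter (fun e => α e ≤ v i)) := hT4 i (by omega)
          _ ≤ (S ∩ E.filter (fun e => α e ≤ v i)).card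
              + nComp (E.filter (fun e => α e ≤ v i)) := by
            have := Finset.card_le_card
              (Finset.inter_subset_inter_right (u := E.filter (fun e => α e ≤ v i)) hS1)
            omega
      · have hij' : i = j + 1 := by omega
        subst hij'
        rw [Finset.inter_eq_left.mpr hS2]
        calc Fintype.card V ≤ S.card + nComp S := card_add_nComp S
          _ = _ := by rw [hS3]
  obtain ⟨S, hS1, hS2, hS3, hS4⟩ := hchain k le_rfl
  have hFk : E.filter (fun e => α e ≤ v k) = E :=
    Finset.filter_true_of_mem (fun e he => hvtop e he)
  rw [hFk] at hS1 hS2 hS3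
  have hncE : nComp E = 1 := nComp_eq_one_of_conn hconn
  have hSnc : nComp S = 1 := by rw [hS2, hncE]
  have hconnS : Conn S := conn_of_nComp_eq_one hSnc
  have hScard : S.card + 1 ≤ Fintype.card V := by omega
  -- cut-rate bound
  have hcut : ∀ j, j < k → ((nComp (E.filter (fun e => α e ≤ v j)) : ℝ)) - 1
      ≤ opt E * ((E.card : ℝ) - ((E.filter (fun e => α e ≤ v j)).card : ℝ)) := by
    intro j hj
    obtain ⟨e0, he0E, he0⟩ : ∃ e0 ∈ E, α e0 = v k := by
      have := hvmem k hk1 le_rfl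
      rwa [Finset.mem_image] at this
    have hvjk : v j < v k := by
      rcases hvstrict j k hj le_rfl with h | ⟨_, h⟩
      · exact h
      · rw [h] at hvkpos; exact absurd hvkpos (lt_irrefl 0)
    have hne : (E \ E.filter (fun e => α e ≤ v j)).Nonempty := by
      refine ⟨e0, Finset.mem_sdiff.mpr ⟨he0E, fun hmem => ?_⟩⟩
      have := (Finset.mem_filter.mp hmem).2
      rw [he0] at this
      linarith
    have hle : cutRate E (E \ E.filter (fun e => α e ≤ v j)) ≤ opt E :=
      Finset.le_sup' (fun E' => cutRate E E')
        (Finset.mem_powerset.mpr (Finset.sdiff_subset (s := E)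
          (t := E.filter (fun e => α e ≤ v j))))
    rw [cutRate, if_pos ⟨hV, hne⟩] at hle
    have hsd : E \ (E \ E.filter (fun e => α e ≤ v j)) = E.filter (fun e => α e ≤ v j) := by
      rw [sdiff_sdiff_right_self]
      exact Finset.inter_eq_right.mpr (Finset.filter_subset _ _)
    rw [hsd, hncE] at hle
    have hpos : (0:ℝ) < ((E \ E.filter (fun e => α e ≤ v j)).card : ℝ) := by
      exact_mod_cast Finset.card_pos.mpr hne
    rw [div_le_iff₀ hpos] at hle
    have hcard : ((E \ E.filter (fun e => α e ≤ v j)).card : ℝ)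
        = (E.card : ℝ) - ((E.filter (fun e => α e ≤ v j)).card : ℝ) := by
      rw [Finset.card_sdiff_of_subset (Finset.filter_subset _ _)]
      have := Finset.card_le_card (Finset.filter_subset (fun e => α e ≤ v j) E)
      push_cast [Nat.cast_sub this]
      ring
    rw [hcard] at hle
    push_cast at hle ⊢
    linarith
  -- final computation
  have hfinal : wt α S ≤ opt E * 1 := by
    calc wt α S = ∑ j ∈ Finset.range k, (v (j+1) - v j) *
          ((S.card : ℝ) - ((S.filter (fun e => α e ≤ v j)).card : ℝ)) := hSUM S hS1
      _ ≤ ∑ j ∈ Finset.range k, (v (j+1) - v j) *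
          (opt E * ((E.card : ℝ) - ((E.filter (fun e => α e ≤ v j)).card : ℝ))) := by
        apply Finset.sum_le_sum
        intro j hj
        rw [Finset.mem_range] at hj
        apply mul_le_mul_of_nonneg_left _ (sub_nonneg.mpr (hvmono j (j+1) (by omega) hj))
        have heq : S.filter (fun e => α e ≤ v j) = S ∩ E.filter (fun e => α e ≤ v j) := by
          ext e
          simp only [Finset.mem_filter, Finset.mem_inter]
          constructor
          · rintro ⟨h1, h2⟩; exact ⟨h1, hS1 h1, h2⟩
          · rintro ⟨h1, _, h2⟩; exact ⟨h1, h2⟩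
        have h1 := hS4 j (by omega)
        have h2 : (S.card : ℝ) - ((S.filter (fun e => α e ≤ v j)).card : ℝ)
            ≤ ((nComp (E.filter (fun e => α e ≤ v j)) : ℝ)) - 1 := by
          rw [heq]
          have h3 : S.card + 1 ≤ (S ∩ E.filter (fun e => α e ≤ v j)).card
              + nComp (E.filter (fun e => α e ≤ v j)) := by omega
          have h3' : ((S.card : ℝ)) + 1 ≤ ((S ∩ E.filter (fun e => α e ≤ v j)).card : ℝ)
              + ((nComp (E.filter (fun e => α e ≤ v j)) : ℝ)) := by exact_mod_cast h3
          linarith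
        linarith [hcut j hj]
      _ = opt E * ∑ j ∈ Finset.range k, (v (j+1) - v j) *
          ((E.card : ℝ) - ((E.filter (fun e => α e ≤ v j)).card : ℝ)) := by
        rw [Finset.mul_sum]
        apply Finset.sum_congr rfl
        intro j _
        ring
      _ = opt E * wt α E := by rw [hSUM E (subset_refl E)]
      _ = opt E * 1 := by rw [wt, hα1]
  rw [mul_one] at hfinal
  exact ⟨S, ⟨hS1, hconnS⟩, hfinal⟩

lemma exists_strategy (E : Finset (Sym2 V)) (hconn : Conn E) :
    ∃ y : Finset (Sym2 V) → ℝ,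
      (∀ S, 0 ≤ y S) ∧ (∀ S, ¬ IsCSG E S → y S = 0) ∧
      ∑ S ∈ E.powerset, y S = 1 ∧
      ∀ e ∈ E, ∑ S ∈ E.powerset.filter (fun S => e ∈ S), y S ≤ opt E := by
  classical
  set χ : Finset (Sym2 V) → (Sym2 V → ℝ) := fun S e => if e ∈ S then 1 else 0 with hχ
  set T0 : Finset (Finset (Sym2 V)) := E.powerset.filter (fun S => IsCSG E S) with hT0
  set A : Finset (Sym2 V → ℝ) := T0.image χ with hA
  set t : Set (Sym2 V → ℝ) := {x | ∀ e ∈ E, x e ≤ opt E} with ht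
  have hEmem : E ∈ T0 := by
    rw [hT0, Finset.mem_filter]
    exact ⟨Finset.mem_powerset_self E, subset_refl E, hconn⟩
  have htconv : Convex ℝ t := by
    intro x hx y hy a b ha hb hab
    intro e he
    have h1 : a * x e ≤ a * opt E := mul_le_mul_of_nonneg_left (hx e he) ha
    have h2 : b * y e ≤ b * opt E := mul_le_mul_of_nonneg_left (hy e he) hb
    have h3 : a * opt E + b * opt E = opt E := by rw [← add_mul, hab, one_mul]
    simp only [Pi.add_apply, Pi.smul_apply, smul_eq_mul]
    linarith
  have htclosed : IsClosed t := by
    have : t = ⋂ e ∈ E, {x : Sym2 V → ℝ | x e ≤ opt E} := by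
      ext x; simp [ht]
    rw [this]
    exact isClosed_biInter (fun e _ => isClosed_le (continuous_apply e) continuous_const)
  have hnd : ¬ Disjoint (convexHull ℝ (A : Set (Sym2 V → ℝ))) t := by
    intro hdisj
    obtain ⟨f, u, v', h1, h2, h3⟩ := geometric_hahn_banach_compact_closed
      (convex_convexHull ℝ _) ((A : Set (Sym2 V → ℝ)).toFinite.isCompact_convexHull ℝ)
      htconv htclosed hdisj
    set γ : Sym2 V → ℝ := fun e => f (fun e' => if e = e' then 1 else 0) with hγ
    have hfx : ∀ x : Sym2 V → ℝ, f x = ∑ e, x e * γ e := by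
      intro x
      conv_lhs => rw [pi_eq_sum_univ x]
      rw [map_sum]
      apply Finset.sum_congr rfl
      intro e _
      rw [map_smul, smul_eq_mul, hγ]
    set x0 : Sym2 V → ℝ := fun e => if e ∈ E then opt E else 0 with hx0
    have hx0t : x0 ∈ t := by
      intro e he
      rw [hx0]; simp only [if_pos he]; exact le_refl _
    have hv'x0 : v' < f x0 := h3 x0 hx0t
    have hmain : ∀ (e0 : Sym2 V) (c : ℝ), (e0 ∈ E → c ≤ 0) → v' < f x0 + c * γ e0 := by
      intro e0 c hc
      have hmem : (x0 + c • (fun e' => if e0 = e' then (1:ℝ) else 0)) ∈ t := by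
        intro e he
        simp only [Pi.add_apply, Pi.smul_apply, smul_eq_mul]
        by_cases he0 : e0 = e
        · subst he0
          show (if e0 ∈ E then opt E else 0) + c * (if e0 = e0 then (1:ℝ) else 0) ≤ opt E
          rw [if_pos he, if_pos rfl, mul_one]
          linarith [hc he]
        · show (if e ∈ E then opt E else 0) + c * (if e0 = e then (1:ℝ) else 0) ≤ opt E
          rw [if_pos he, if_neg he0, mul_zero, add_zero]
      have := h3 _ hmem
      rw [map_add, map_smul, smul_eq_mul] at this
      exact this
    have hγE : ∀ e0 ∈ E, γ e0 ≤ 0 := by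
      intro e0 he0
      by_contra hpos
      push_neg at hpos
      have hc : (v' - 1 - f x0) / γ e0 ≤ 0 :=
        div_nonpos_of_nonpos_of_nonneg (by linarith) (le_of_lt hpos)
      have := hmain e0 _ (fun _ => hc)
      rw [div_mul_cancel₀ _ (ne_of_gt hpos)] at this
      linarith
    have hγnE : ∀ e0 ∉ E, γ e0 = 0 := by
      intro e0 he0
      by_contra hne
      have := hmain e0 ((v' - 1 - f x0) / γ e0) (fun h => absurd h he0)
      rw [div_mul_cancel₀ _ hne] at this
      linarith
    have hfχ : ∀ S : Finset (Sym2 V), f (χ S) = ∑ e ∈ S, γ e := by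
      intro S
      rw [hfx, hχ]
      simp only [ite_mul, one_mul, zero_mul]
      rw [Finset.sum_ite_mem, Finset.univ_inter]
    have hfx0' : f x0 = opt E * ∑ e ∈ E, γ e := by
      rw [hfx, hx0]
      simp only [ite_mul, zero_mul]
      rw [Finset.sum_ite_mem, Finset.univ_inter, Finset.mul_sum]
    have hAlt : ∀ S ∈ T0, ∑ e ∈ S, γ e < u := by
      intro S hS
      rw [← hfχ]
      exact h1 _ (subset_convexHull ℝ _ (by
        rw [Finset.mem_coe, hA]
        exact Finset.mem_image_of_mem χ hS))
    set c0 : ℝ := ∑ e ∈ E, (-γ e) with hc0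
    have hc0sum : ∑ e ∈ E, γ e = -c0 := by rw [hc0]; simp
    have hc0nn : 0 ≤ c0 := Finset.sum_nonneg (fun e he => by linarith [hγE e he])
    rcases eq_or_lt_of_le hc0nn with hc00 | hc0pos
    · have hE0 : ∑ e ∈ E, γ e = 0 := by rw [hc0sum, ← hc00]; ring
      have := hAlt E hEmem
      rw [hE0] at this
      rw [hfx0', hE0, mul_zero] at hv'x0
      linarith
    · set α : Sym2 V → ℝ := fun e => if e ∈ E then (-γ e) / c0 else 0 with hα
      have hdist : IsDist E α := by
        refine ⟨?_, ?_, ?_⟩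
        · intro e
          simp only [hα]
          by_cases he : e ∈ E
          · rw [if_pos he]
            exact div_nonneg (by linarith [hγE e he]) (le_of_lt hc0pos)
          · rw [if_neg he]
        · intro e he; simp only [hα, if_neg he]
        · simp only [hα]
          rw [Finset.sum_congr rfl (fun e (he : e ∈ E) => if_pos he), ← Finset.sum_div, ← hc0,
            div_self (ne_of_gt hc0pos)]
      obtain ⟨S, hScsg, hwt⟩ := exists_good_csg E hconn α hdist
      have hST0 : S ∈ T0 := by
        rw [hT0, Finset.mem_filter]
        exact ⟨Finset.mem_powerset.mpr hScsg.1, hScsg⟩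
      have hwtval : wt α S = (∑ e ∈ S, (-γ e)) / c0 := by
        rw [wt, Finset.sum_div]
        apply Finset.sum_congr rfl
        intro e he
        show α e = -γ e / c0
        rw [hα]
        show (if e ∈ E then -γ e / c0 else 0) = -γ e / c0
        rw [if_pos (hScsg.1 he)]
      have hlt := hAlt S hST0
      rw [hfx0', hc0sum] at hv'x0
      -- v' < opt E * (-c0), ∑_S γ < u < v'
      have hkey : ∑ e ∈ S, γ e < opt E * (-c0) := by linarith
      have hSγ : ∑ e ∈ S, (-γ e) = -∑ e ∈ S, γ e := by simp
      rw [hwtval] at hwt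
      rw [div_le_iff₀ hc0pos] at hwt
      rw [hSγ] at hwt
      linarith
  obtain ⟨x, hxA, hxt⟩ := Set.not_disjoint_iff.mp hnd
  rw [Finset.convexHull_eq] at hxA
  obtain ⟨w, hw0, hw1, hwx⟩ := hxA
  have hxsum : x = ∑ a ∈ A, w a • a := by
    rw [← hwx, Finset.centerMass_eq_of_sum_1 _ id hw1]
    rfl
  have hχinj : ∀ S1 ∈ T0, ∀ S2 ∈ T0, χ S1 = χ S2 → S1 = S2 := by
    intro S1 _ S2 _ h
    ext e
    have := congrFun h e
    rw [hχ] at this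
    simp only at this
    by_cases h1 : e ∈ S1 <;> by_cases h2 : e ∈ S2 <;>
      simp [h1, h2] at this ⊢
  refine ⟨fun S => if S ∈ T0 then w (χ S) else 0, ?_, ?_, ?_, ?_⟩
  · intro S
    show 0 ≤ if S ∈ T0 then w (χ S) else 0
    by_cases hS : S ∈ T0
    · rw [if_pos hS]
      exact hw0 _ (Finset.mem_image_of_mem χ hS)
    · rw [if_neg hS]
  · intro S hS
    show (if S ∈ T0 then w (χ S) else 0) = 0
    rw [if_neg (fun h : S ∈ T0 => hS (Finset.mem_filter.mp (hT0 ▸ h)).2)]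
  · rw [Finset.sum_ite_mem]
    have hint : E.powerset ∩ T0 = T0 :=
      Finset.inter_eq_right.mpr (Finset.filter_subset _ _)
    rw [hint, ← Finset.sum_image hχinj]
    exact hw1
  · intro e he
    rw [Finset.sum_ite_mem]
    have hint : E.powerset.filter (fun S => e ∈ S) ∩ T0 = T0.filter (fun S => e ∈ S) := by
      ext S
      simp only [Finset.mem_inter, Finset.mem_filter, hT0]
      tauto
    rw [hint]
    have hxe : x e = ∑ S ∈ T0.filter (fun S => e ∈ S), w (χ S) := by
      rw [hxsum, Finset.sum_apply, Finset.sum_filter, hA, Finset.sum_image hχinj]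
      apply Finset.sum_congr rfl
      intro S _
      simp only [Pi.smul_apply, smul_eq_mul, hχ]
      by_cases hS : e ∈ S <;> simp [hS]
    rw [← hxe]
    exact hxt e he

end Aux

theorem stmt_13 {V : Type} [Fintype V] [DecidableEq V] (E : Finset (Sym2 V))
    (hconn : Conn E) :
    (∀ α, IsDist E α → ∃ S, IsCSG E S ∧ wt α S ≤ opt E) ∧ opt E ≤ 1 ∧
    -- the hider has a mixed strategy over connected spanning subgraphs
    -- guaranteeing a wiretap probability of at most `opt E`
    (∃ y : Finset (Sym2 V) → ℝ,
      (∀ S, 0 ≤ y S) ∧ (∀ S, ¬ IsCSG E S → y S = 0) ∧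
      ∑ S ∈ E.powerset, y S = 1 ∧
      ∀ e ∈ E, ∑ S ∈ E.powerset.filter (fun S => e ∈ S), y S ≤ opt E) :=
  ⟨fun α hα => exists_good_csg E hconn α hα, opt_le_one E hconn, exists_strategy E hconn⟩
end

section
/- Let G=(V,E) be a finite connected graph with opt = max_{E'⊆E} CR(E') and suppose CR(E) < opt. Then for every maxmin strategy α of the wiretap game (a distribution with α(S) ≥ opt for all connected spanning subgraphs S), there exists an edge e with α(e) = 0. -/
open Finset

section Aux

set_option linter.unusedSectionVars false

variable {V : Type} [Fintype V] [DecidableEq V]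

instance auxFiniteCC (G : SimpleGraph V) : Finite G.ConnectedComponent := Quot.finite _

lemma aux_nat_card_lt {α β : Type*} [Finite α] (f : α → β) (hs : Function.Surjective f)
    (hni : ¬ Function.Injective f) : Nat.card β < Nat.card α := by
  rcases lt_or_ge (Nat.card β) (Nat.card α) with h | h
  · exact h
  · exact absurd (hs.bijective_of_nat_card_le h).injective hni

lemma aux_comp_surj {G H : SimpleGraph V} (h : G ≤ H) :
    Function.Surjective
      (SimpleGraph.ConnectedComponent.map (SimpleGraph.Hom.ofLE h)) := by
  intro c
  obtain ⟨v, rfl⟩ := c.exists_rep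
  exact ⟨G.connectedComponentMk v, rfl⟩

lemma aux_nComp_lt {A A' : Finset (Sym2 V)} (h : A ⊆ A') {x y : V}
    (hr : (SimpleGraph.fromEdgeSet (↑A' : Set (Sym2 V))).Reachable x y)
    (hn : ¬ (SimpleGraph.fromEdgeSet (↑A : Set (Sym2 V))).Reachable x y) :
    nComp A' < nComp A := by
  set G := SimpleGraph.fromEdgeSet (↑A : Set (Sym2 V))
  set G' := SimpleGraph.fromEdgeSet (↑A' : Set (Sym2 V))
  have hle : G ≤ G' := SimpleGraph.fromEdgeSet_mono (Finset.coe_subset.2 h)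
  apply aux_nat_card_lt _ (aux_comp_surj hle)
  intro hinj
  apply hn
  have : (G.connectedComponentMk x).map (SimpleGraph.Hom.ofLE hle)
      = (G.connectedComponentMk y).map (SimpleGraph.Hom.ofLE hle) := by
    simp only [SimpleGraph.ConnectedComponent.map_mk]
    exact SimpleGraph.ConnectedComponent.sound hr
  exact SimpleGraph.ConnectedComponent.exact (hinj this)

lemma aux_nComp_conn {A : Finset (Sym2 V)} (h : Conn A) : nComp A = 1 := by
  rw [nComp, Nat.card_eq_one_iff_unique]
  refine ⟨⟨fun c d => ?_⟩, ⟨SimpleGraph.connectedComponentMk _ h.nonempty.some⟩⟩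
  obtain ⟨v, rfl⟩ := c.exists_rep
  obtain ⟨w, rfl⟩ := d.exists_rep
  exact SimpleGraph.ConnectedComponent.sound (h.preconnected v w)

lemma aux_reach_transfer {A B : Finset (Sym2 V)}
    (hB : ∀ x y : V, s(x, y) ∈ B → (SimpleGraph.fromEdgeSet (↑A : Set (Sym2 V))).Reachable x y)
    {u v : V} (h : (SimpleGraph.fromEdgeSet (↑(A ∪ B) : Set (Sym2 V))).Reachable u v) :
    (SimpleGraph.fromEdgeSet (↑A : Set (Sym2 V))).Reachable u v := by
  rw [SimpleGraph.reachable_iff_reflTransGen] at h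
  induction h with
  | refl => exact SimpleGraph.Reachable.refl _
  | tail _ hadj ih =>
    refine ih.trans ?_
    rw [SimpleGraph.fromEdgeSet_adj] at hadj
    obtain ⟨hmem, hne⟩ := hadj
    rw [Finset.coe_union, Set.mem_union] at hmem
    rcases hmem with h1 | h1
    · exact SimpleGraph.Adj.reachable ((SimpleGraph.fromEdgeSet_adj _).2 ⟨h1, hne⟩)
    · exact hB _ _ h1

/-- From a connected `A ∪ B` one can select at most `nComp A - 1` edges `F ⊆ B`
so that `A ∪ F` is still connected. -/
lemma aux_lemmaN : ∀ (n : ℕ) (B A : Finset (Sym2 V)), B.card = n → Conn (A ∪ B) →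
    ∃ F, F ⊆ B ∧ Conn (A ∪ F) ∧ F.card + 1 ≤ nComp A := by
  intro n
  induction n using Nat.strong_induction_on with
  | _ n ih =>
    intro B A hcard hconn
    have hne : Nonempty V := hconn.nonempty.elim fun v => ⟨v⟩
    by_cases hA : Conn A
    · refine ⟨∅, Finset.empty_subset _, by rwa [Finset.union_empty], ?_⟩
      exact Nat.one_le_iff_ne_zero.2 (Nat.card_ne_zero.2
        ⟨⟨SimpleGraph.connectedComponentMk _ Classical.ofNonempty⟩, inferInstance⟩)
    · have : ∃ x y : V, s(x, y) ∈ B ∧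
          ¬ (SimpleGraph.fromEdgeSet (↑A : Set (Sym2 V))).Reachable x y := by
        by_contra hc
        push_neg at hc
        have hpre : (SimpleGraph.fromEdgeSet (↑A : Set (Sym2 V))).Preconnected :=
          fun u v => aux_reach_transfer hc (hconn.preconnected u v)
        exact hA ((SimpleGraph.connected_iff _).2 ⟨hpre, hne⟩)
      obtain ⟨x, y, hxyB, hxy⟩ := this
      have hxny : x ≠ y := by rintro rfl; exact hxy (SimpleGraph.Reachable.refl _)
      set e := s(x, y)
      set A' := insert e A with hA'
      have hAA' : A ⊆ A' := Finset.subset_insert _ _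
      have hreach' : (SimpleGraph.fromEdgeSet (↑A' : Set (Sym2 V))).Reachable x y :=
        SimpleGraph.Adj.reachable ((SimpleGraph.fromEdgeSet_adj _).2 ⟨by simp [hA', e], hxny⟩)
      have hdrop : nComp A' < nComp A := aux_nComp_lt hAA' hreach' hxy
      have hunion : A' ∪ B.erase e = A ∪ B := by
        rw [hA', Finset.insert_union, ← Finset.union_insert, Finset.insert_erase hxyB]
      obtain ⟨F', hF'B, hF'conn, hF'card⟩ := ih (B.erase e).card
        (by have hb := Finset.card_pos.2 ⟨e, hxyB⟩
            rw [Finset.card_erase_of_mem hxyB]; omega) (B.erase e) A' rfl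
        (by rwa [hunion])
      refine ⟨insert e F', ?_, ?_, ?_⟩
      · exact Finset.insert_subset hxyB (hF'B.trans (Finset.erase_subset _ _))
      · have : A ∪ insert e F' = A' ∪ F' := by
          rw [hA', Finset.insert_union, Finset.union_insert]
        rwa [this]
      · have h1 : (insert e F').card ≤ F'.card + 1 := Finset.card_insert_le _ _
        omega

lemma aux_opt_nonneg (E : Finset (Sym2 V)) : 0 ≤ opt E := by
  have h := Finset.le_sup' (fun E' => cutRate E E') (Finset.empty_mem_powerset E)
  rwa [cutRate, if_neg (by simp)] at h

lemma aux_key_ineq {E P : Finset (Sym2 V)} (hV : 1 < Fintype.card V) (hconn : Conn E)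
    (hPE : P ⊆ E) (hP : P.Nonempty) : ((nComp (E \ P) : ℝ) - 1) ≤ opt E * P.card := by
  have h1 := Finset.le_sup' (fun E' => cutRate E E') (Finset.mem_powerset.2 hPE)
  rw [cutRate, if_pos ⟨hV, hP⟩, aux_nComp_conn hconn] at h1
  have hc : (0 : ℝ) < P.card := by exact_mod_cast hP.card_pos
  rw [opt]
  push_cast at h1
  linarith [(div_le_iff₀ hc).1 h1]

/-- The key structural lemma: for every nonnegative weight function there is a
connected spanning subgraph of weight at most `opt E` times the total weight. -/
lemma aux_lemmaM (E : Finset (Sym2 V)) (hV : 1 < Fintype.card V) (hconn : Conn E) :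
    ∀ (n : ℕ) (w : Sym2 V → ℝ), (∀ e, 0 ≤ w e) →
      (E.filter (fun e => 0 < w e)).card = n →
      ∃ S, IsCSG E S ∧ wt w S ≤ opt E * ∑ e ∈ E, w e := by
  intro n
  induction n using Nat.strong_induction_on with
  | _ n ih =>
    intro w hw hn
    set P := E.filter (fun e => 0 < w e) with hPdef
    have hPE : P ⊆ E := Finset.filter_subset _ _
    have hzero : ∀ e ∈ E, e ∉ P → w e = 0 := by
      intro e heE heP
      have : ¬ 0 < w e := by
        intro hpos; exact heP (Finset.mem_filter.2 ⟨heE, hpos⟩)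
      linarith [hw e]
    rcases P.eq_empty_or_nonempty with hP | hP
    · refine ⟨E, ⟨Finset.Subset.refl _, hconn⟩, ?_⟩
      have hz : ∀ e ∈ E, w e = 0 := fun e he => hzero e he (by simp [hP])
      rw [wt, Finset.sum_eq_zero hz]
      simp
    · obtain ⟨e₀, he₀P, hmin⟩ := P.exists_min_image w hP
      set t := w e₀ with htdef
      have ht : 0 < t := (Finset.mem_filter.1 he₀P).2
      set w' : Sym2 V → ℝ := fun e => if e ∈ P then w e - t else 0 with hw'def
      have hw' : ∀ e, 0 ≤ w' e := by
        intro e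
        by_cases heP : e ∈ P
        · simp only [hw'def, if_pos heP]; linarith [hmin e heP]
        · simp [hw'def, heP]
      have hP'sub : E.filter (fun e => 0 < w' e) ⊆ P.erase e₀ := by
        intro e he
        obtain ⟨heE, hpos⟩ := Finset.mem_filter.1 he
        have heP : e ∈ P := by
          by_contra hcon
          simp [hw'def, hcon] at hpos
        have hne : e ≠ e₀ := by
          intro hcon
          rw [hw'def] at hpos
          simp only [if_pos heP] at hpos
          rw [hcon] at hpos
          linarith
        exact Finset.mem_erase.2 ⟨hne, heP⟩
      have hP'lt : (E.filter (fun e => 0 < w' e)).card < n := by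
        have h1 := Finset.card_le_card hP'sub
        have h2 : (P.erase e₀).card = P.card - 1 := Finset.card_erase_of_mem he₀P
        have h3 := Finset.card_pos.2 hP
        omega
      obtain ⟨S', ⟨hS'E, hS'conn⟩, hS'w⟩ := ih _ hP'lt w' hw' rfl
      have hus : Conn ((E \ P) ∪ S') := by
        refine SimpleGraph.Connected.mono ?_ hS'conn
        exact SimpleGraph.fromEdgeSet_mono (Finset.coe_subset.2 Finset.subset_union_right)
      obtain ⟨F, hFS', hFconn, hFcard⟩ := aux_lemmaN S'.card S' (E \ P) rfl hus
      have hFE : F ⊆ E := hFS'.trans hS'E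
      refine ⟨(E \ P) ∪ F, ⟨Finset.union_subset (Finset.sdiff_subset) hFE, hFconn⟩, ?_⟩
      -- arithmetic
      have hwE : ∀ e ∈ E, w e = w' e + (if e ∈ P then t else 0) := by
        intro e he
        by_cases heP : e ∈ P
        · simp [hw'def, heP]
        · simp [hw'def, heP, hzero e he heP]
      have hwF : ∀ e ∈ F, w e = w' e + (if e ∈ P then t else 0) :=
        fun e he => hwE e (hFE he)
      have hsum1 : wt w ((E \ P) ∪ F) ≤ ∑ e ∈ F, w e := by
        have key : (∑ e ∈ (E \ P) ∪ F, w e) + ∑ e ∈ (E \ P) ∩ F, w e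
            = (∑ e ∈ E \ P, w e) + ∑ e ∈ F, w e := Finset.sum_union_inter
        have hz : ∑ e ∈ E \ P, w e = 0 :=
          Finset.sum_eq_zero fun e he =>
            hzero e (Finset.mem_sdiff.1 he).1 (Finset.mem_sdiff.1 he).2
        have hint : 0 ≤ ∑ e ∈ (E \ P) ∩ F, w e :=
          Finset.sum_nonneg fun e _ => hw e
        rw [wt]; linarith
      have hite : ∀ (G : Finset (Sym2 V)), ∑ e ∈ G, (if e ∈ P then t else 0)
          = ((G.filter (fun e => e ∈ P)).card : ℝ) * t := by
        intro G
        rw [← Finset.sum_filter, Finset.sum_const, nsmul_eq_mul]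
      have hsum2 : ∑ e ∈ F, w e
          = (∑ e ∈ F, w' e) + ((F.filter (fun e => e ∈ P)).card : ℝ) * t := by
        have h := Finset.sum_congr rfl hwF
        rw [Finset.sum_add_distrib, hite F] at h
        exact h
      have hfilE : E.filter (fun e => e ∈ P) = P := by
        rw [Finset.filter_mem_eq_inter, Finset.inter_eq_right.2 hPE]
      have hsumE : ∑ e ∈ E, w e = (∑ e ∈ E, w' e) + (P.card : ℝ) * t := by
        have h := Finset.sum_congr rfl hwE
        rw [Finset.sum_add_distrib, hite E, hfilE] at h
        exact h
      have hF1 : ((F.filter (fun e => e ∈ P)).card : ℝ) ≤ (F.card : ℝ) := by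
        exact_mod_cast Finset.card_le_card (Finset.filter_subset _ _)
      have hF2 : (F.card : ℝ) ≤ opt E * P.card := by
        have h1 : ((F.card : ℝ) + 1) ≤ (nComp (E \ P) : ℝ) := by exact_mod_cast hFcard
        have h2 := aux_key_ineq hV hconn hPE hP
        linarith
      have hF3 : (∑ e ∈ F, w' e) ≤ wt w' S' :=
        Finset.sum_le_sum_of_subset_of_nonneg hFS' fun e _ _ => hw' e
      have hmul : ((F.filter (fun e => e ∈ P)).card : ℝ) * t ≤ (opt E * P.card) * t :=
        mul_le_mul_of_nonneg_right (hF1.trans hF2) ht.le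
      calc wt w ((E \ P) ∪ F) ≤ ∑ e ∈ F, w e := hsum1
        _ = (∑ e ∈ F, w' e) + ((F.filter (fun e => e ∈ P)).card : ℝ) * t := hsum2
        _ ≤ opt E * (∑ e ∈ E, w' e) + (opt E * P.card) * t := by linarith
        _ = opt E * ∑ e ∈ E, w e := by rw [hsumE]; ring

end Aux

theorem stmt_15 {V : Type} [Fintype V] [DecidableEq V] (E : Finset (Sym2 V))
    (hconn : Conn E) (hlt : cutRate E E < opt E)
    (α : Sym2 V → ℝ) (hα : IsDist E α)
    (hmax : ∀ S, IsCSG E S → opt E ≤ wt α S) :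
    ∃ e ∈ E, α e = 0 := by
  by_contra hcontra
  push_neg at hcontra
  obtain ⟨hα0, hαout, hα1⟩ := hα
  have hpos : ∀ e ∈ E, 0 < α e := fun e he => lt_of_le_of_ne (hα0 e) (Ne.symm (hcontra e he))
  have hV : 1 < Fintype.card V := by
    by_contra hV
    have h1 : opt E ≤ 0 := by
      apply Finset.sup'_le
      intro E' _
      rw [cutRate, if_neg (by tauto)]
    have h2 : cutRate E E = 0 := by rw [cutRate, if_neg (by tauto)]
    rw [h2] at hlt; linarith
  have hE : E.Nonempty := by
    rcases E.eq_empty_or_nonempty with h | h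
    · have h2 : cutRate E E = 0 := by rw [cutRate, if_neg (by simp [h])]
      have h1 : opt E ≤ 0 := by
        apply Finset.sup'_le
        intro E' hE'
        have hE'e : E' = ∅ := by simpa [h] using Finset.mem_powerset.1 hE'
        rw [hE'e, cutRate, if_neg (by simp)]
      rw [h2] at hlt; linarith
    · exact h
  have hcardE : (0 : ℝ) < E.card := by exact_mod_cast hE.card_pos
  have hstrict : ((nComp (∅ : Finset (Sym2 V)) : ℝ) - 1) < opt E * E.card := by
    have h := hlt
    rw [cutRate, if_pos ⟨hV, hE⟩, aux_nComp_conn hconn, Finset.sdiff_self] at h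
    push_cast at h
    rw [opt] at *
    linarith [(div_lt_iff₀ hcardE).1 h]
  obtain ⟨e₀, he₀, hmin⟩ := E.exists_min_image α hE
  set t := α e₀ with htdef
  have ht : 0 < t := hpos e₀ he₀
  set w' : Sym2 V → ℝ := fun e => if e ∈ E then α e - t else 0 with hw'def
  have hw' : ∀ e, 0 ≤ w' e := by
    intro e; by_cases he : e ∈ E
    · simp only [hw'def, if_pos he]; linarith [hmin e he]
    · simp [hw'def, he]
  obtain ⟨S', ⟨hS'E, hS'conn⟩, hS'w⟩ := aux_lemmaM E hV hconn _ w' hw' rfl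
  obtain ⟨F, hFS', hFconn, hFcard⟩ :=
    aux_lemmaN S'.card S' ∅ rfl (by rwa [Finset.empty_union])
  rw [Finset.empty_union] at hFconn
  have hFE : F ⊆ E := hFS'.trans hS'E
  have hge : opt E ≤ wt α F := hmax F ⟨hFE, hFconn⟩
  have hwF : ∀ e ∈ F, α e = w' e + t := by
    intro e he; simp [hw'def, hFE he]
  have h1 : wt α F = (∑ e ∈ F, w' e) + (F.card : ℝ) * t := by
    rw [wt, Finset.sum_congr rfl hwF, Finset.sum_add_distrib, Finset.sum_const, nsmul_eq_mul]
  have h2 : (∑ e ∈ F, w' e) ≤ wt w' S' :=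
    Finset.sum_le_sum_of_subset_of_nonneg hFS' fun e _ _ => hw' e
  have h3 : ∑ e ∈ E, w' e = 1 - (E.card : ℝ) * t := by
    have hc : ∀ e ∈ E, w' e = α e - t := fun e he => by simp [hw'def, he]
    rw [Finset.sum_congr rfl hc, Finset.sum_sub_distrib, hα1, Finset.sum_const, nsmul_eq_mul]
  have h4 : (F.card : ℝ) ≤ (nComp (∅ : Finset (Sym2 V)) : ℝ) - 1 := by
    have hc : ((F.card : ℝ) + 1) ≤ (nComp (∅ : Finset (Sym2 V)) : ℝ) := by exact_mod_cast hFcard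
    linarith
  have h5 : (F.card : ℝ) * t < (opt E * E.card) * t :=
    mul_lt_mul_of_pos_right (lt_of_le_of_lt h4 hstrict) ht
  have h6 : opt E * (∑ e ∈ E, w' e) = opt E - (opt E * E.card) * t := by
    rw [h3]; ring
  linarith
end
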